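/- (Casorati determinant D_3, type q-D_5^{(1)}.) Suppose Y, Ȳ ∈ ℂ[[X]] satisfy both (1−a_1X)(1−a_2X)·Y(qX) = (1−b_1X)(1−b_2X)·Y and (1−a_1X)·Ȳ = (1−b_1X)·Y, let (P, Q) be a Padé pair for Y and (P̄, Q̄) a Padé pair for Ȳ. Then there exists a constant c ∈ ℂ such that (1−a_2X)·P(qX)·Q̄(X) − (1−b_2X)·P̄(X)·Q(qX) = c·X^{m+n+1}. -/

import Mathlib

/-!
Subtracting `(1 - b₂X)` times the second relation from the first and cancelling `1 - a₁X` gives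
`(1 - a₂X) Y(qX) = (1 - b₂X) Ȳ`. Hence the determinant, as a power series, is a combination of the
Padé remainders `Y(qX) Q(qX) - P(qX)` and `Ȳ Q̄ - P̄`, both divisible by `X^(m+n+1)`. Being a
polynomial of degree at most `m + n + 1`, it is a constant multiple of `X^(m+n+1)`.
-/

open Polynomial

theorem dvd_mul_mul_sub_mul_mul_of_dvd_sub {R : Type*} [CommRing R] {d A B Y Y' P Q P' Q' : R}
    (hY : A * Y = B * Y') (h : d ∣ Y * Q - P) (h' : d ∣ Y' * Q' - P') :
    d ∣ A * P * Q' - B * P' * Q := by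
  have hcomb : A * P * Q' - B * P' * Q =
      B * Q * (Y' * Q' - P') - A * Q' * (Y * Q - P) + Q * Q' * (A * Y - B * Y') := by ring
  rw [hcomb, hY, sub_self, mul_zero, add_zero]
  exact dvd_sub (h'.mul_left _) (h.mul_left _)

namespace PowerSeries

variable {R : Type*} [CommRing R]

theorem X_pow_dvd_rescale {n : ℕ} {f : R⟦X⟧} (a : R) (h : X ^ n ∣ f) : X ^ n ∣ rescale a f := by
  rw [X_pow_dvd_iff] at h ⊢
  intro k hk
  rw [coeff_rescale, h k hk, mul_zero]

theorem X_pow_dvd_coe_iff {n : ℕ} {p : R[X]} : X ^ n ∣ (p : R⟦X⟧) ↔ Polynomial.X ^ n ∣ p := by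
  simp only [X_pow_dvd_iff, Polynomial.X_pow_dvd_iff, Polynomial.coeff_coe]

end PowerSeries

namespace Polynomial

variable {R : Type*} [CommRing R]

theorem coe_comp_C_mul_X (a : R) (p : R[X]) :
    ((p.comp (C a * X) : R[X]) : PowerSeries R) = PowerSeries.rescale a (p : PowerSeries R) := by
  ext k
  rw [coeff_coe, comp_C_mul_X_coeff, PowerSeries.coeff_rescale, coeff_coe, mul_comm]

theorem natDegree_comp_C_mul_X_le (a : R) (p : R[X]) :
    (p.comp (C a * X)).natDegree ≤ p.natDegree :=
  natDegree_le_iff_coeff_eq_zero.mpr fun k hk => by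
    rw [comp_C_mul_X_coeff, coeff_eq_zero_of_natDegree_lt hk, zero_mul]

theorem eq_C_mul_X_pow_of_X_pow_dvd_of_natDegree_le {n : ℕ} {p : R[X]}
    (hdvd : X ^ n ∣ p) (hdeg : p.natDegree ≤ n) : p = C (p.coeff n) * X ^ n := by
  ext k
  rw [coeff_C_mul_X_pow]
  rcases lt_trichotomy k n with hk | rfl | hk
  · rw [if_neg hk.ne, X_pow_dvd_iff.mp hdvd k hk]
  · rw [if_pos rfl]
  · rw [if_neg hk.ne', coeff_eq_zero_of_natDegree_lt (hdeg.trans_lt hk)]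

end Polynomial

/-- Casorati determinant `D_3` for type q-D_5^{(1)}. -/
theorem casorati_D3_qD5
    (q a1 a2 b1 b2 : ℂ) (m n : ℕ)
    (Y Ybar : PowerSeries ℂ)
    (hY : (1 - PowerSeries.C a1 * PowerSeries.X) * (1 - PowerSeries.C a2 * PowerSeries.X) *
        PowerSeries.rescale q Y =
      (1 - PowerSeries.C b1 * PowerSeries.X) * (1 - PowerSeries.C b2 * PowerSeries.X) * Y)
    (hYY : (1 - PowerSeries.C a1 * PowerSeries.X) * Ybar =
      (1 - PowerSeries.C b1 * PowerSeries.X) * Y)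
    (P Q : Polynomial ℂ) (hdP : P.degree ≤ m) (hdQ : Q.degree ≤ n)
    (hPade : (PowerSeries.X : PowerSeries ℂ) ^ (m + n + 1) ∣
      Y * (Q : PowerSeries ℂ) - (P : PowerSeries ℂ))
    (Pbar Qbar : Polynomial ℂ) (hdPbar : Pbar.degree ≤ m) (hdQbar : Qbar.degree ≤ n)
    (hPadebar : (PowerSeries.X : PowerSeries ℂ) ^ (m + n + 1) ∣
      Ybar * (Qbar : PowerSeries ℂ) - (Pbar : PowerSeries ℂ)) :
    ∃ c : ℂ,
      (1 - C a2 * X) * (P.comp (C q * X)) * Qbar - (1 - C b2 * X) * Pbar * (Q.comp (C q * X)) =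
        C c * X ^ (m + n + 1) := by
  set N := m + n + 1
  have hfactor : (1 - PowerSeries.C a1 * PowerSeries.X : PowerSeries ℂ) ≠ 0 := fun h => by
    simpa using congrArg PowerSeries.constantCoeff h
  have hshift : (1 - PowerSeries.C a2 * PowerSeries.X) * PowerSeries.rescale q Y =
      (1 - PowerSeries.C b2 * PowerSeries.X) * Ybar :=
    mul_left_cancel₀ hfactor
      (by linear_combination hY - (1 - PowerSeries.C b2 * PowerSeries.X) * hYY)
  have hPadeq := PowerSeries.X_pow_dvd_rescale q hPade
  rw [map_sub, map_mul] at hPadeq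
  have hdvd : X ^ N ∣
      (1 - C a2 * X) * P.comp (C q * X) * Qbar - (1 - C b2 * X) * Pbar * Q.comp (C q * X) := by
    rw [← PowerSeries.X_pow_dvd_coe_iff]
    simpa [coe_comp_C_mul_X] using
      dvd_mul_mul_sub_mul_mul_of_dvd_sub hshift hPadeq hPadebar
  have hdeg : ((1 - C a2 * X) * P.comp (C q * X) * Qbar -
      (1 - C b2 * X) * Pbar * Q.comp (C q * X)).natDegree ≤ N := by
    rw [← natDegree_le_iff_degree_le] at hdP hdQ hdPbar hdQbar
    have ha2 : (1 - C a2 * X : ℂ[X]).natDegree ≤ 1 := by compute_degree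
    have hb2 : (1 - C b2 * X : ℂ[X]).natDegree ≤ 1 := by compute_degree
    refine (natDegree_sub_le _ _).trans (max_le ?_ ?_)
    · exact (natDegree_mul_le_of_le (natDegree_mul_le_of_le ha2
        ((natDegree_comp_C_mul_X_le q P).trans hdP)) hdQbar).trans (by omega)
    · exact (natDegree_mul_le_of_le (natDegree_mul_le_of_le hb2 hdPbar)
        ((natDegree_comp_C_mul_X_le q Q).trans hdQ)).trans (by omega)
  exact ⟨_, eq_C_mul_X_pow_of_X_pow_dvd_of_natDegree_le hdvd hdeg⟩
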